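/- Let g be a probability density on [0,∞) with survival function Ḡ, let α ∈ L²([0,∞)) satisfy ∫_0^∞ g^{1/2} α = 0, and let η ≥ 2 be an integer. Then ∫_0^∞ [g(t)^{1/2} Ḡ(t)^{η−1} α(t) + (η−1) g(t) Ḡ(t)^{η−2} ∫_t^∞ g^{1/2} α du] dt = 0. -/

import Mathlib

/-!
With `H t = ∫ u in Ioi t, √(g u) * α u`, the integrand is `-(G ^ (η - 1) * H)'` almost everywhere.
Tail integrals of integrable functions are absolutely continuous on bounded intervals and tend to
`0` at infinity, so the integral telescopes to `G 0 ^ (η - 1) * H 0`, which vanishes because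
`H 0 = 0` is the orthogonality hypothesis.
-/

open MeasureTheory Set Filter Topology

theorem absolutelyContinuousOnInterval_const {X : Type*} [PseudoMetricSpace X] (c : X) (a b : ℝ) :
    AbsolutelyContinuousOnInterval (fun _ => c) a b := by
  simpa [AbsolutelyContinuousOnInterval] using tendsto_const_nhds

theorem AbsolutelyContinuousOnInterval.congr {X : Type*} [PseudoMetricSpace X] {f g : ℝ → X}
    {a b : ℝ} (hf : AbsolutelyContinuousOnInterval f a b) (hfg : EqOn f g (uIcc a b)) :
    AbsolutelyContinuousOnInterval g a b := by
  refine hf.congr' ?_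
  filter_upwards [mem_inf_of_right (mem_principal_self _)] with E hE
  exact Finset.sum_congr rfl fun i hi => by rw [hfg (hE.1 i hi).1, hfg (hE.1 i hi).2]

theorem AbsolutelyContinuousOnInterval.pow {f : ℝ → ℝ} {a b : ℝ}
    (hf : AbsolutelyContinuousOnInterval f a b) (n : ℕ) :
    AbsolutelyContinuousOnInterval (fun x => f x ^ n) a b := by
  induction n with
  | zero => simpa using absolutelyContinuousOnInterval_const (1 : ℝ) a b
  | succ n ih => simpa only [pow_succ] using ih.fun_mul hf

theorem integral_Ioi_deriv_eq_sub_of_absolutelyContinuousOnInterval {u : ℝ → ℝ} {a l : ℝ}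
    (hu : ∀ b, a ≤ b → AbsolutelyContinuousOnInterval u a b)
    (hint : IntegrableOn (deriv u) (Ioi a)) (hlim : Tendsto u atTop (𝓝 l)) :
    ∫ x in Ioi a, deriv u x = l - u a := by
  refine tendsto_nhds_unique (intervalIntegral_tendsto_integral_Ioi a hint tendsto_id) ?_
  refine (hlim.sub_const (u a)).congr' ?_
  filter_upwards [eventually_ge_atTop a] with b hb
  exact (hu b hb).integral_deriv_eq_sub.symm

theorem integrable_sqrt_mul_of_memLp_two {X : Type*} [MeasurableSpace X] {μ : Measure X}
    {g α : X → ℝ} (hg : Integrable g μ) (hg_nonneg : 0 ≤ᵐ[μ] g) (hα : MemLp α 2 μ) :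
    Integrable (fun x => √(g x) * α x) μ := by
  have hsqrt : MemLp (fun x => √(g x)) 2 μ := by
    refine (memLp_two_iff_integrable_sq (Real.continuous_sqrt.comp_aestronglyMeasurable hg.1)).2
      (hg.congr ?_)
    filter_upwards [hg_nonneg] with x hx
    exact (Real.sq_sqrt hx).symm
  exact hsqrt.integrable_mul hα

namespace MeasureTheory

variable {f g : ℝ → ℝ} {a : ℝ}

theorem Integrable.ae_hasDerivAt_integral_Ioi (hf : Integrable f) :
    ∀ᵐ x, HasDerivAt (fun t => ∫ s in Ioi t, f s) (-f x) x := by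
  have htail : (fun t => ∫ s in Ioi t, f s) = fun t => (∫ s in Ioi 0, f s) - ∫ s in 0..t, f s :=
    funext fun t => eq_sub_of_add_eq'
      (intervalIntegral.integral_interval_add_Ioi hf.integrableOn hf.integrableOn)
  filter_upwards [LocallyIntegrable.ae_hasDerivAt_integral hf.locallyIntegrable] with x hx
  rw [htail]
  exact (hx 0).const_sub _

theorem IntegrableOn.ae_hasDerivAt_integral_Ioi (hf : IntegrableOn f (Ioi a)) :
    ∀ᵐ x ∂volume.restrict (Ioi a), HasDerivAt (fun t => ∫ s in Ioi t, f s) (-f x) x := by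
  have hf₀ : Integrable ((Ioi a).indicator f) := (integrable_indicator_iff measurableSet_Ioi).2 hf
  rw [ae_restrict_iff' measurableSet_Ioi]
  filter_upwards [hf₀.ae_hasDerivAt_integral_Ioi] with x hx (hax : a < x)
  rw [indicator_of_mem (mem_Ioi.2 hax)] at hx
  refine hx.congr_of_eventuallyEq ?_
  filter_upwards [Ioi_mem_nhds hax] with t (hat : a < t)
  exact setIntegral_congr_fun measurableSet_Ioi fun s hs => (indicator_of_mem (hat.trans hs) f).symm

theorem IntegrableOn.absolutelyContinuousOnInterval_integral_Ioi (hf : IntegrableOn f (Ioi a))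
    {b : ℝ} (hab : a ≤ b) : AbsolutelyContinuousOnInterval (fun t => ∫ s in Ioi t, f s) a b := by
  have hfab : IntervalIntegrable f volume a b :=
    (intervalIntegrable_iff_integrableOn_Ioc_of_le hab).2 (hf.mono_set Ioc_subset_Ioi_self)
  refine ((absolutelyContinuousOnInterval_const (∫ s in Ioi a, f s) a b).sub
    (hfab.absolutelyContinuousOnInterval_intervalIntegral left_mem_uIcc)).congr fun t ht => ?_
  rw [uIcc_of_le hab] at ht
  rw [Pi.sub_apply, ← intervalIntegral.integral_Ioi_sub_Ioi hf ht.1, sub_sub_cancel]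

theorem IntegrableOn.aestronglyMeasurable_integral_Ioi (hf : IntegrableOn f (Ioi a)) :
    AEStronglyMeasurable (fun t => ∫ s in Ioi t, f s) (volume.restrict (Ioi a)) :=
  ((continuousOn_Ici_primitive_Ioi hf).mono Ioi_subset_Ici_self).aestronglyMeasurable
    measurableSet_Ioi

theorem IntegrableOn.ae_norm_integral_Ioi_le (hf : IntegrableOn f (Ioi a)) :
    ∀ᵐ t ∂volume.restrict (Ioi a), ‖∫ s in Ioi t, f s‖ ≤ ∫ s in Ioi a, ‖f s‖ :=
  ae_restrict_of_forall_mem measurableSet_Ioi fun _ hat =>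
    (norm_integral_le_integral_norm _).trans <| setIntegral_mono_set hf.norm
      (ae_of_all _ fun _ => norm_nonneg _) (Ioi_subset_Ioi (le_of_lt hat)).eventuallyLE

theorem IntegrableOn.integrableOn_pow_integral_Ioi_mul_add (hf : IntegrableOn f (Ioi a))
    (hg : IntegrableOn g (Ioi a)) (n : ℕ) :
    IntegrableOn (fun t => (∫ s in Ioi t, f s) ^ (n + 1) * g t
      + f t * ((n + 1) * (∫ s in Ioi t, f s) ^ n * ∫ s in Ioi t, g s)) (Ioi a) := by
  have hFm := hf.aestronglyMeasurable_integral_Ioi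
  refine (hg.bdd_mul (c := (∫ s in Ioi a, ‖f s‖) ^ (n + 1)) (hFm.pow _) ?_).add
    (hf.mul_bdd (c := (n + 1) * (∫ s in Ioi a, ‖f s‖) ^ n * ∫ s in Ioi a, ‖g s‖)
      ((hFm.pow _).const_mul _ |>.mul hg.aestronglyMeasurable_integral_Ioi) ?_)
  · filter_upwards [hf.ae_norm_integral_Ioi_le] with t hFt
    rw [Pi.pow_apply, norm_pow]
    exact pow_le_pow_left₀ (norm_nonneg _) hFt _
  · filter_upwards [hf.ae_norm_integral_Ioi_le, hg.ae_norm_integral_Ioi_le] with t hFt hGt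
    rw [norm_mul, norm_mul, norm_pow, Real.norm_of_nonneg (by positivity)]
    gcongr

theorem IntegrableOn.integral_Ioi_pow_integral_Ioi_mul_add (hf : IntegrableOn f (Ioi a))
    (hg : IntegrableOn g (Ioi a)) (n : ℕ) :
    ∫ t in Ioi a, ((∫ s in Ioi t, f s) ^ (n + 1) * g t
        + f t * ((n + 1) * (∫ s in Ioi t, f s) ^ n * ∫ s in Ioi t, g s))
      = (∫ s in Ioi a, f s) ^ (n + 1) * ∫ s in Ioi a, g s := by
  set F := fun t => ∫ s in Ioi t, f s
  set G := fun t => ∫ s in Ioi t, g s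
  set u := fun t => F t ^ (n + 1) * G t
  have hderiv : ∀ᵐ t ∂volume.restrict (Ioi a),
      deriv u t = -(F t ^ (n + 1) * g t + f t * ((n + 1) * F t ^ n * G t)) := by
    filter_upwards [hf.ae_hasDerivAt_integral_Ioi, hg.ae_hasDerivAt_integral_Ioi] with t hF hG
    refine ((hF.fun_pow (n + 1)).fun_mul hG).deriv.trans ?_
    push_cast
    ring
  have hlim : Tendsto u atTop (𝓝 0) := by
    simpa using ((tendsto_integral_Ioi_zero tendsto_id).pow (n + 1)).mul
      (tendsto_integral_Ioi_zero (f := g) tendsto_id)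
  have hFTC := integral_Ioi_deriv_eq_sub_of_absolutelyContinuousOnInterval
    (fun b hb => ((hf.absolutelyContinuousOnInterval_integral_Ioi hb).pow (n + 1)).fun_mul
      (hg.absolutelyContinuousOnInterval_integral_Ioi hb))
    ((hf.integrableOn_pow_integral_Ioi_mul_add hg n).neg.congr (hderiv.mono fun _ h => h.symm))
    hlim
  rw [integral_congr_ae hderiv, integral_neg] at hFTC
  linarith

end MeasureTheory

theorem BstarA_integration_by_parts_general
    (g : ℝ → ℝ) (hg_nonneg : ∀ t, 0 ≤ g t)
    (hg_int : IntegrableOn g (Ioi 0))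
    (G : ℝ → ℝ) (hG : ∀ t, G t = ∫ u in Ioi t, g u)
    (α : ℝ → ℝ)
    (hα_L2 : MemLp α 2 (volume.restrict (Ioi (0:ℝ))))
    (h_orth : ∫ t in Ioi (0:ℝ), Real.sqrt (g t) * α t = 0)
    (η : ℕ) (hη : 2 ≤ η) :
    ∫ t in Ioi (0:ℝ),
      (Real.sqrt (g t) * G t ^ (η - 1) * α t
        + ((η : ℝ) - 1) * g t * G t ^ (η - 2) * ∫ u in Ioi t, Real.sqrt (g u) * α u)
      = 0 := by
  obtain ⟨n, rfl⟩ : ∃ n, η = n + 2 := ⟨η - 2, by omega⟩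
  have hh : IntegrableOn (fun t => √(g t) * α t) (Ioi 0) :=
    integrable_sqrt_mul_of_memLp_two hg_int (ae_of_all _ hg_nonneg) hα_L2
  have key := hg_int.integral_Ioi_pow_integral_Ioi_mul_add hh n
  rw [h_orth, mul_zero] at key
  refine (integral_congr_ae (ae_of_all _ fun t => ?_)).trans key
  rw [hG, show n + 2 - 1 = n + 1 by omega, Nat.add_sub_cancel]
  push_cast
  ring

theorem BstarA_integration_by_parts
    (g : ℝ → ℝ) (hg_meas : Measurable g) (hg_nonneg : ∀ t, 0 ≤ g t)
    (hg_int : IntegrableOn g (Ioi 0))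
    (hg_one : ∫ t in Ioi (0:ℝ), g t = 1)
    (G : ℝ → ℝ) (hG : ∀ t, G t = ∫ u in Ioi t, g u)
    (α : ℝ → ℝ) (hα_meas : Measurable α)
    (hα_L2 : MemLp α 2 (volume.restrict (Ioi (0:ℝ))))
    (h_orth : ∫ t in Ioi (0:ℝ), Real.sqrt (g t) * α t = 0)
    (η : ℕ) (hη : 2 ≤ η) :
    ∫ t in Ioi (0:ℝ),
      (Real.sqrt (g t) * G t ^ (η - 1) * α t
        + ((η : ℝ) - 1) * g t * G t ^ (η - 2) * ∫ u in Ioi t, Real.sqrt (g u) * α u)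
      = 0 :=
  BstarA_integration_by_parts_general g hg_nonneg hg_int G hG α hα_L2 h_orth η hη
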